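/- arXiv:2311.18210 — 7 statements merged into one kernel-verified Lean document; each statement's English description precedes it below -/
import Mathlib

section
/- For every real number a ≥ 0, it holds that √(1 + a) ≥ 1 + min{a/3, √(a/3)}. -/
/-- For every real `a ≥ 0`, `√(1 + a) ≥ 1 + min (a/3) √(a/3)`. -/
theorem stmt_1 (a : ℝ) (ha : 0 ≤ a) :
    1 + min (a / 3) (Real.sqrt (a / 3)) ≤ Real.sqrt (1 + a) := by
  have ha3 : (0:ℝ) ≤ a / 3 := by linarith
  rcases le_total a 3 with h | h
  · have hmin : min (a / 3) (Real.sqrt (a / 3)) = a / 3 := by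
      apply min_eq_left
      nlinarith [Real.sq_sqrt ha3, Real.sqrt_nonneg (a/3)]
    rw [hmin]
    rw [show (1:ℝ) + a/3 = 1 + a/3 from rfl]
    have h1 : (0:ℝ) ≤ 1 + a/3 := by linarith
    rw [← Real.sqrt_sq h1]
    apply Real.sqrt_le_sqrt
    nlinarith
  · have hs : Real.sqrt (a/3) ≤ a/3 := by
      nlinarith [Real.sq_sqrt ha3, Real.sqrt_nonneg (a/3)]
    have hmin : min (a / 3) (Real.sqrt (a / 3)) = Real.sqrt (a/3) := min_eq_right hs
    rw [hmin]
    have h1 : (0:ℝ) ≤ 1 + Real.sqrt (a/3) := by positivity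
    rw [← Real.sqrt_sq h1]
    apply Real.sqrt_le_sqrt
    nlinarith [Real.sq_sqrt ha3, hs]
end

section
/- Let r ≥ 0 be a real number and x a real number with −1 ≤ x < 1/r (interpreting the constraint as x ≤ 1 when r = 0). Then (1 + x)^r ≤ 1/(1 − r·x). -/
/-- Bernoulli-type inequality: for a real exponent `r ≥ 0` and `x ∈ [-1, 1/r)`
(encoded as `r * x < 1`, which for `r = 0` is automatic), one has
`(1 + x) ^ r ≤ 1 / (1 - r * x)`. -/
theorem stmt_3 (r x : ℝ) (hr : 0 ≤ r) (hx : -1 ≤ x) (hrx : r * x < 1) :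
    (1 + x) ^ r ≤ 1 / (1 - r * x) := by
  have h1 : (0:ℝ) < 1 - r * x := by linarith
  have h2 : (1 + x : ℝ) ≤ Real.exp x := by
    have := Real.add_one_le_exp x; linarith
  have h3 : (1 + x) ^ r ≤ (Real.exp x) ^ r :=
    Real.rpow_le_rpow (by linarith) h2 hr
  have h4 : (Real.exp x) ^ r = Real.exp (x * r) := by
    rw [← Real.exp_mul]
  have h5 : 1 - r * x ≤ Real.exp (-(x * r)) := by
    have := Real.add_one_le_exp (-(x*r)); linarith
  have h6 : Real.exp (x * r) ≤ 1 / (1 - r * x) := by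
    rw [le_div_iff₀ h1]
    calc Real.exp (x * r) * (1 - r * x) ≤ Real.exp (x * r) * Real.exp (-(x * r)) := by
          exact mul_le_mul_of_nonneg_left h5 (Real.exp_pos _).le
      _ = 1 := by rw [← Real.exp_add]; simp
  calc (1 + x) ^ r ≤ Real.exp (x * r) := h4 ▸ h3
    _ ≤ 1 / (1 - r * x) := h6
end

section
/- Let f : ℝⁿ → ℝ be twice continuously differentiable with μI ⪯ ∇²f(x) ⪯ ωI for all x (0 < μ ≤ ω) and ‖∇²f(y) − ∇²f(x)‖ ≤ L‖y − x‖ for all x, y. Then f is strongly self-concordant with constant M = L/μ^{3/2}, i.e., for all x, y, z, w ∈ ℝⁿ: ∇²f(y) − ∇²f(x) ⪯ M·‖y − x‖_{∇²f(z)}·∇²f(w), where ‖h‖_A = ⟨Ah, h⟩^{1/2}. -/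
open scoped RealInnerProductSpace

/-- Strong self-concordance from strong convexity, smoothness and Hessian
Lipschitz continuity. The Hessian of `f` at `x` is represented by the
quadratic/bilinear form `iteratedFDeriv ℝ 2 f x`; the Loewner order
`B₁ ⪯ B₂` is expressed as `∀ u, B₁ u u ≤ B₂ u u`, and
`‖h‖_{∇²f(z)} = √(∇²f(z)[h,h])`. If `μI ⪯ ∇²f ⪯ ωI` and
`‖∇²f(y) - ∇²f(x)‖ ≤ L‖y - x‖` (operator norm of bilinear forms, i.e. the
spectral norm), then with `M = L/μ^{3/2}`,
`∇²f(y) - ∇²f(x) ⪯ M ‖y - x‖_{∇²f(z)} ∇²f(w)`. -/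
theorem stmt_7 {n : ℕ} (f : EuclideanSpace ℝ (Fin n) → ℝ)
    (hf : ContDiff ℝ 2 f) (μ ω L : ℝ) (hμ : 0 < μ) (hμω : μ ≤ ω) (hL : 0 ≤ L)
    (hlow : ∀ x u, μ * ‖u‖ ^ 2 ≤ iteratedFDeriv ℝ 2 f x ![u, u])
    (hup : ∀ x u, iteratedFDeriv ℝ 2 f x ![u, u] ≤ ω * ‖u‖ ^ 2)
    (hlip : ∀ x y, ‖iteratedFDeriv ℝ 2 f y - iteratedFDeriv ℝ 2 f x‖ ≤ L * ‖y - x‖) :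
    ∀ x y z w u : EuclideanSpace ℝ (Fin n),
      iteratedFDeriv ℝ 2 f y ![u, u] - iteratedFDeriv ℝ 2 f x ![u, u] ≤
        (L / μ ^ ((3 : ℝ) / 2)) *
          Real.sqrt (iteratedFDeriv ℝ 2 f z ![y - x, y - x]) *
          iteratedFDeriv ℝ 2 f w ![u, u] := by
  intro x y z w u
  set D := iteratedFDeriv ℝ 2 f y - iteratedFDeriv ℝ 2 f x with hD
  have h1 : iteratedFDeriv ℝ 2 f y ![u, u] - iteratedFDeriv ℝ 2 f x ![u, u]
      = D ![u, u] := by simp [hD]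
  have h2 : D ![u, u] ≤ L * ‖y - x‖ * ‖u‖ ^ 2 := by
    calc D ![u, u] ≤ ‖D ![u, u]‖ := le_abs_self _
      _ ≤ ‖D‖ * ∏ i, ‖(![u, u] : Fin 2 → EuclideanSpace ℝ (Fin n)) i‖ :=
        D.le_opNorm _
      _ = ‖D‖ * ‖u‖ ^ 2 := by
        rw [Fin.prod_univ_two]; simp [sq]
      _ ≤ (L * ‖y - x‖) * ‖u‖ ^ 2 := by
        gcongr
        exact hlip x y
  have hz : Real.sqrt μ * ‖y - x‖ ≤ Real.sqrt (iteratedFDeriv ℝ 2 f z ![y - x, y - x]) := by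
    have := hlow z (y - x)
    calc Real.sqrt μ * ‖y - x‖ = Real.sqrt (μ * ‖y - x‖ ^ 2) := by
          rw [Real.sqrt_mul hμ.le, Real.sqrt_sq (norm_nonneg _)]
      _ ≤ _ := Real.sqrt_le_sqrt this
  have hw : μ * ‖u‖ ^ 2 ≤ iteratedFDeriv ℝ 2 f w ![u, u] := hlow w u
  have hμ32 : (0:ℝ) < μ ^ ((3:ℝ)/2) := Real.rpow_pos_of_pos hμ _
  have hc : (0:ℝ) ≤ L / μ ^ ((3:ℝ)/2) := div_nonneg hL hμ32.le
  have key : (L / μ ^ ((3:ℝ)/2)) * (Real.sqrt μ * ‖y - x‖) * (μ * ‖u‖ ^ 2)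
      = L * ‖y - x‖ * ‖u‖ ^ 2 := by
    rw [Real.sqrt_eq_rpow]
    have h : μ ^ ((1:ℝ)/2) * μ = μ ^ ((3:ℝ)/2) := by
      rw [show ((3:ℝ)/2) = 1/2 + 1 by norm_num, Real.rpow_add hμ, Real.rpow_one]
    field_simp
    rw [← h]; ring
  rw [h1]
  calc D ![u, u] ≤ L * ‖y - x‖ * ‖u‖ ^ 2 := h2
    _ = (L / μ ^ ((3:ℝ)/2)) * (Real.sqrt μ * ‖y - x‖) * (μ * ‖u‖ ^ 2) := key.symm
    _ ≤ _ := by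
      apply mul_le_mul
      · exact mul_le_mul_of_nonneg_left hz hc
      · exact hw
      · positivity
      · positivity
end

section
/- Let f_1, …, f_p : ℝⁿ → ℝ each be strongly self-concordant with constant M (i.e., ∇²f_i(y) − ∇²f_i(x) ⪯ M‖y−x‖_{∇²f_i(z)}∇²f_i(w) for all x,y,z,w), with each ∇²f_i positive definite everywhere. Then f = ∑_{i=1}^p f_i is strongly self-concordant with constant √p·M: ∇²f(y) − ∇²f(x) ⪯ √p·M·‖y−x‖_{∇²f(z)}·∇²f(w). -/
/-- If each `f i` is strongly self-concordant with constant `M` (with Hessians,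
represented by the bilinear forms `iteratedFDeriv ℝ 2 (f i) x`, positive
definite everywhere), then `∑ i, f i` is strongly self-concordant with constant
`√p · M`. The Loewner order `B₁ ⪯ B₂` is expressed as `∀ u, B₁ u u ≤ B₂ u u`
and `‖h‖_A = √(A[h,h])`. -/
theorem stmt_8 {n p : ℕ} (f : Fin p → EuclideanSpace ℝ (Fin n) → ℝ)
    (hf : ∀ i, ContDiff ℝ 2 (f i)) (M : ℝ) (hM : 0 ≤ M)
    (hpos : ∀ i x u, u ≠ 0 → 0 < iteratedFDeriv ℝ 2 (f i) x ![u, u])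
    (hssc : ∀ i, ∀ x y z w u : EuclideanSpace ℝ (Fin n),
      iteratedFDeriv ℝ 2 (f i) y ![u, u] - iteratedFDeriv ℝ 2 (f i) x ![u, u] ≤
        M * Real.sqrt (iteratedFDeriv ℝ 2 (f i) z ![y - x, y - x]) *
          iteratedFDeriv ℝ 2 (f i) w ![u, u]) :
    ∀ x y z w u : EuclideanSpace ℝ (Fin n),
      iteratedFDeriv ℝ 2 (fun t => ∑ i, f i t) y ![u, u] -
          iteratedFDeriv ℝ 2 (fun t => ∑ i, f i t) x ![u, u] ≤
        Real.sqrt p * M *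
          Real.sqrt (iteratedFDeriv ℝ 2 (fun t => ∑ i, f i t) z ![y - x, y - x]) *
          iteratedFDeriv ℝ 2 (fun t => ∑ i, f i t) w ![u, u] := by
  intro x y z w u
  have hsum : iteratedFDeriv ℝ 2 (fun t => ∑ i, f i t) =
      ∑ i, iteratedFDeriv ℝ 2 (f i) :=
    iteratedFDeriv_sum (fun j _ => hf j)
  have happ : ∀ (v : EuclideanSpace ℝ (Fin n)) (t : EuclideanSpace ℝ (Fin n)),
      iteratedFDeriv ℝ 2 (fun s => ∑ i, f i s) t ![v, v] =
        ∑ i, iteratedFDeriv ℝ 2 (f i) t ![v, v] := by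
    intro v t
    rw [hsum]
    simp
  -- nonnegativity of each quadratic form
  have hnn : ∀ i (t v : EuclideanSpace ℝ (Fin n)),
      0 ≤ iteratedFDeriv ℝ 2 (f i) t ![v, v] := by
    intro i t v
    by_cases hv : v = 0
    · subst hv
      have h0 : iteratedFDeriv ℝ 2 (f i) t ![0, 0] = 0 :=
        (iteratedFDeriv ℝ 2 (f i) t).map_coord_zero (0 : Fin 2) (by simp)
      rw [h0]
    · exact (hpos i t v hv).le
  rw [happ u y, happ u x, happ (y - x) z, happ u w, ← Finset.sum_sub_distrib]
  set c : Fin p → ℝ := fun i => iteratedFDeriv ℝ 2 (f i) z ![y - x, y - x]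
  set b : Fin p → ℝ := fun i => iteratedFDeriv ℝ 2 (f i) w ![u, u]
  have hcnn : ∀ i, 0 ≤ c i := fun i => hnn i z (y - x)
  have hbnn : ∀ i, 0 ≤ b i := fun i => hnn i w u
  have hsumc : ∀ i, c i ≤ ∑ j, c j := fun i =>
    Finset.single_le_sum (fun j _ => hcnn j) (Finset.mem_univ i)
  calc ∑ i, (iteratedFDeriv ℝ 2 (f i) y ![u, u] - iteratedFDeriv ℝ 2 (f i) x ![u, u])
      ≤ ∑ i, M * Real.sqrt (c i) * b i :=
        Finset.sum_le_sum fun i _ => hssc i x y z w u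
    _ ≤ ∑ i, M * Real.sqrt (∑ j, c j) * b i := by
        refine Finset.sum_le_sum fun i _ => ?_
        exact mul_le_mul_of_nonneg_right
          (mul_le_mul_of_nonneg_left (Real.sqrt_le_sqrt (hsumc i)) hM) (hbnn i)
    _ = M * Real.sqrt (∑ j, c j) * ∑ i, b i := by rw [← Finset.mul_sum]
    _ ≤ Real.sqrt p * M * Real.sqrt (∑ j, c j) * ∑ i, b i := by
        rcases Nat.eq_zero_or_pos p with hp | hp
        · subst hp; simp
        · have h1 : (1 : ℝ) ≤ Real.sqrt p := by
            rw [show (1:ℝ) = Real.sqrt 1 by simp]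
            exact Real.sqrt_le_sqrt (by exact_mod_cast hp)
          have : M * Real.sqrt (∑ j, c j) ≤ Real.sqrt p * (M * Real.sqrt (∑ j, c j)) := by
            nlinarith [Real.sqrt_nonneg (∑ j, c j), mul_nonneg hM (Real.sqrt_nonneg (∑ j, c j))]
          calc M * Real.sqrt (∑ j, c j) * ∑ i, b i
              ≤ Real.sqrt p * (M * Real.sqrt (∑ j, c j)) * ∑ i, b i :=
                mul_le_mul_of_nonneg_right this (Finset.sum_nonneg fun i _ => hbnn i)
            _ = Real.sqrt p * M * Real.sqrt (∑ j, c j) * ∑ i, b i := by ring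
end

section
/- Let A, G ∈ ℝ^{n×n} be symmetric positive definite with G ⪰ A and (G−A)u ≠ 0 for u ∈ ℝⁿ. Then σ_A(SR1(G, A, u)) = σ_A(G) − ‖(G−A)u‖²_{A⁻¹}/⟨(G−A)u, u⟩ ≤ σ_A(G), where σ_A(H) = Trace(A⁻¹H) − n and ‖v‖²_{A⁻¹} = vᵀA⁻¹v. -/
open Matrix

theorem Matrix.trace_mul_sub_smul_vecMulVec {ι K : Type*} [Fintype ι] [Field K]
    (B G : Matrix ι ι K) (v : ι → K) (c : K) :
    (B * (G - c⁻¹ • vecMulVec v v)).trace = (B * G).trace - v ⬝ᵥ (B *ᵥ v) / c := by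
  rw [Matrix.mul_sub, Matrix.mul_smul, trace_sub, trace_smul, mul_vecMulVec, trace_vecMulVec,
    dotProduct_comm, smul_eq_mul, inv_mul_eq_div]

theorem Matrix.PosSemidef.mulVec_dotProduct_pos {ι : Type*} [Fintype ι] {M : Matrix ι ι ℝ}
    (hM : M.PosSemidef) {u : ι → ℝ} (hMu : M *ᵥ u ≠ 0) : 0 < (M *ᵥ u) ⬝ᵥ u := by
  have hne : u ⬝ᵥ (M *ᵥ u) ≠ 0 := fun h =>
    hMu ((hM.dotProduct_mulVec_zero_iff u).mp (by simpa using h))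
  rw [dotProduct_comm]
  exact (hM.dotProduct_mulVec_nonneg u).lt_of_ne' (by simpa using hne)

theorem stmt_13_general {n : ℕ} (A G : Matrix (Fin n) (Fin n) ℝ) (u : Fin n → ℝ)
    (hA : A.PosDef) (hGA : (G - A).PosSemidef)
    (huGA : (G - A) *ᵥ u ≠ 0) :
    (A⁻¹ * (G - (((G - A) *ᵥ u) ⬝ᵥ u)⁻¹ •
        vecMulVec ((G - A) *ᵥ u) ((G - A) *ᵥ u))).trace - n =
      ((A⁻¹ * G).trace - n) -
        (((G - A) *ᵥ u) ⬝ᵥ (A⁻¹ *ᵥ ((G - A) *ᵥ u))) / (((G - A) *ᵥ u) ⬝ᵥ u) ∧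
    (A⁻¹ * (G - (((G - A) *ᵥ u) ⬝ᵥ u)⁻¹ •
        vecMulVec ((G - A) *ᵥ u) ((G - A) *ᵥ u))).trace - n ≤
      (A⁻¹ * G).trace - n := by
  have hcurv : 0 < ((G - A) *ᵥ u) ⬝ᵥ u := hGA.mulVec_dotProduct_pos huGA
  have hnorm : 0 < ((G - A) *ᵥ u) ⬝ᵥ (A⁻¹ *ᵥ ((G - A) *ᵥ u)) := by
    simpa using hA.inv.dotProduct_mulVec_pos huGA
  rw [trace_mul_sub_smul_vecMulVec]
  exact ⟨by ring, by linarith [div_pos hnorm hcurv]⟩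

/-- The SR1 update decreases `σ_A` by exactly
`‖(G-A)u‖²_{A⁻¹}/⟨(G-A)u, u⟩`, and in particular `σ_A(SR1(G,A,u)) ≤ σ_A(G)`. -/
theorem stmt_13 {n : ℕ} (A G : Matrix (Fin n) (Fin n) ℝ) (u : Fin n → ℝ)
    (hA : A.PosDef) (hG : G.PosDef) (hGA : (G - A).PosSemidef)
    (huGA : (G - A) *ᵥ u ≠ 0) :
    (A⁻¹ * (G - (((G - A) *ᵥ u) ⬝ᵥ u)⁻¹ •
        vecMulVec ((G - A) *ᵥ u) ((G - A) *ᵥ u))).trace - n =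
      ((A⁻¹ * G).trace - n) -
        (((G - A) *ᵥ u) ⬝ᵥ (A⁻¹ *ᵥ ((G - A) *ᵥ u))) / (((G - A) *ᵥ u) ⬝ᵥ u) ∧
    (A⁻¹ * (G - (((G - A) *ᵥ u) ⬝ᵥ u)⁻¹ •
        vecMulVec ((G - A) *ᵥ u) ((G - A) *ᵥ u))).trace - n ≤
      (A⁻¹ * G).trace - n :=
  stmt_13_general A G u hA hGA huGA
end

section
/- Let A, G be symmetric positive definite n×n matrices with μI ⪯ A ⪯ ωI (0 < μ ≤ ω) and G ⪰ A. Choose the greedy coordinate vector ū = argmax over the standard basis vectors e_1,…,e_n of ⟨Ge, e⟩/⟨Ae, e⟩. Then the BFGS update G⁺ = BFGS(G, A, ū) := G − Gūūᵀ G/⟨Gū, ū⟩ + Aūūᵀ A/⟨Aū, ū⟩ satisfies σ_A(G⁺) ≤ (1 − μ/(nω))·σ_A(G). -/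
/-!
The update changes `tr(A⁻¹G)` by `1 - ⟨A⁻¹Gū, Gū⟩ / ⟨Gū, ū⟩`, and Cauchy–Schwarz for the
`A⁻¹`-inner product of `Gū` and `Aū` bounds the subtracted quotient below by
`r = ⟨Gū, ū⟩ / ⟨Aū, ū⟩`; so `σ_A` drops by at least `r - 1`. On the other hand `A⁻¹ ⪯ μ⁻¹ I`
gives `σ_A(G) = tr(A⁻¹(G - A)) ≤ μ⁻¹ tr(G - A)`, and since `r` is the largest ratio of diagonal
entries, `tr(G - A) ≤ (r - 1) tr A ≤ (r - 1) n ω`.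
-/

open Matrix

namespace Matrix

variable {ι : Type*} [Fintype ι]

theorem trace_mul_vecMulVec {R : Type*} [Semiring R] (M : Matrix ι ι R) (u v : ι → R) :
    (M * vecMulVec u v).trace = (M *ᵥ u) ⬝ᵥ v := by
  rw [mul_vecMulVec, trace_vecMulVec]

theorem single_one_dotProduct_mulVec_single_one [DecidableEq ι] {R : Type*} [Semiring R]
    (M : Matrix ι ι R) (i : ι) : Pi.single i 1 ⬝ᵥ M *ᵥ Pi.single i 1 = M i i := by
  simp

open scoped MatrixOrder ComplexOrder in
theorem PosSemidef.trace_mul_nonneg {𝕜 : Type*} [RCLike 𝕜] {P Q : Matrix ι ι 𝕜}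
    (hP : P.PosSemidef) (hQ : Q.PosSemidef) : 0 ≤ (P * Q).trace := by
  classical
  obtain ⟨B, rfl⟩ := CStarAlgebra.nonneg_iff_eq_star_mul_self.mp hP.nonneg
  rw [Matrix.mul_assoc, trace_mul_comm, Matrix.mul_assoc, ← Matrix.mul_assoc,
    star_eq_conjTranspose]
  exact (hQ.mul_mul_conjTranspose_same B).trace_nonneg

theorem PosSemidef.dotProduct_mulVec_sq_le [DecidableEq ι] {M : Matrix ι ι ℝ}
    (hM : M.PosSemidef) (x y : ι → ℝ) :
    (x ⬝ᵥ M *ᵥ y) ^ 2 ≤ (x ⬝ᵥ M *ᵥ x) * (y ⬝ᵥ M *ᵥ y) := by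
  simpa only [toBilin'_apply'] using M.toBilin'.apply_sq_le_of_symm
    (fun v ↦ by simpa [toBilin'_apply'] using hM.dotProduct_mulVec_nonneg v)
    (LinearMap.BilinForm.isSymm_iff.mp <|
      isSymm_toBilin'_iff_isSymm.mpr (isHermitian_iff_isSymm.mp hM.isHermitian)) x y

theorem trace_le_card_mul_of_posSemidef_smul_one_sub [DecidableEq ι] {A : Matrix ι ι ℝ} {ω : ℝ}
    (hAω : (ω • 1 - A).PosSemidef) : A.trace ≤ Fintype.card ι * ω := by
  have := hAω.trace_nonneg
  rw [trace_sub, trace_smul, trace_one, smul_eq_mul] at this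
  linarith

theorem trace_sub_le_of_diag_div_le {A G : Matrix ι ι ℝ} (hA : A.PosDef) {r : ℝ}
    (hr : ∀ j, G j j / A j j ≤ r) : (G - A).trace ≤ (r - 1) * A.trace := by
  rw [trace_sub, trace, trace, Finset.mul_sum, ← Finset.sum_sub_distrib]
  refine Finset.sum_le_sum fun j _ ↦ ?_
  have := (div_le_iff₀ hA.diag_pos).mp (hr j)
  simp only [diag_apply]
  linarith

namespace PosDef

variable [DecidableEq ι] {A : Matrix ι ι ℝ} {μ : ℝ}

theorem inv_mulVec_mulVec (hA : A.PosDef) (u : ι → ℝ) : A⁻¹ *ᵥ A *ᵥ u = u := by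
  rw [mulVec_mulVec, nonsing_inv_mul A hA.det_pos.ne'.isUnit, one_mulVec]

theorem dotProduct_inv_mulVec_le (hA : A.PosDef) (hμ : 0 < μ) (hAμ : (A - μ • 1).PosSemidef)
    (x : ι → ℝ) : x ⬝ᵥ A⁻¹ *ᵥ x ≤ μ⁻¹ * (x ⬝ᵥ x) := by
  set y := A⁻¹ *ᵥ x
  have hx : A *ᵥ y = x := by
    simp [y, mulVec_mulVec, mul_nonsing_inv A hA.det_pos.ne'.isUnit]
  have hq : x ⬝ᵥ y = y ⬝ᵥ A *ᵥ y := by rw [hx, dotProduct_comm]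
  have hμq : μ * (y ⬝ᵥ y) ≤ y ⬝ᵥ A *ᵥ y := by
    have := hAμ.dotProduct_mulVec_nonneg y
    simp only [star_trivial, sub_mulVec, smul_mulVec, one_mulVec, dotProduct_sub,
      dotProduct_smul, smul_eq_mul] at this
    linarith
  have hcs : (x ⬝ᵥ y) ^ 2 ≤ (x ⬝ᵥ x) * (y ⬝ᵥ y) := by
    simpa using PosSemidef.one.dotProduct_mulVec_sq_le x y
  have hxx : 0 ≤ x ⬝ᵥ x := by simpa using PosSemidef.one.dotProduct_mulVec_nonneg (R := ℝ) x
  rw [hq] at hcs ⊢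
  set q := y ⬝ᵥ A *ᵥ y
  have key : μ * q * q ≤ (x ⬝ᵥ x) * q :=
    calc μ * q * q = μ * q ^ 2 := by ring
      _ ≤ μ * ((x ⬝ᵥ x) * (y ⬝ᵥ y)) := mul_le_mul_of_nonneg_left hcs hμ.le
      _ = (x ⬝ᵥ x) * (μ * (y ⬝ᵥ y)) := by ring
      _ ≤ (x ⬝ᵥ x) * q := mul_le_mul_of_nonneg_left hμq hxx
  rw [le_inv_mul_iff₀ hμ]
  have hq_nonneg : 0 ≤ q := by simpa using hA.posSemidef.dotProduct_mulVec_nonneg y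
  rcases hq_nonneg.eq_or_lt with hq0 | hq0
  · rw [← hq0, mul_zero]
    exact hxx
  · exact le_of_mul_le_mul_right key hq0

theorem posSemidef_inv_smul_one_sub_inv (hA : A.PosDef) (hμ : 0 < μ)
    (hAμ : (A - μ • 1).PosSemidef) : (μ⁻¹ • (1 : Matrix ι ι ℝ) - A⁻¹).PosSemidef := by
  refine .of_dotProduct_mulVec_nonneg
    ((isHermitian_one.smul (IsSelfAdjoint.all μ⁻¹)).sub hA.isHermitian.inv) fun x ↦ ?_
  have := hA.dotProduct_inv_mulVec_le hμ hAμ x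
  simp only [star_trivial, sub_mulVec, smul_mulVec, one_mulVec, dotProduct_sub,
    dotProduct_smul, smul_eq_mul]
  linarith

theorem trace_inv_mul_le (hA : A.PosDef) (hμ : 0 < μ) (hAμ : (A - μ • 1).PosSemidef)
    {P : Matrix ι ι ℝ} (hP : P.PosSemidef) : (A⁻¹ * P).trace ≤ μ⁻¹ * P.trace := by
  have := (hA.posSemidef_inv_smul_one_sub_inv hμ hAμ).trace_mul_nonneg hP
  rw [Matrix.sub_mul, trace_sub, smul_mul, Matrix.one_mul, trace_smul, smul_eq_mul] at this
  linarith

theorem trace_inv_mul_sub_card_le [Nonempty ι] {G : Matrix ι ι ℝ} {ω r : ℝ} (hA : A.PosDef)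
    (hμ : 0 < μ) (hAμ : (A - μ • 1).PosSemidef) (hAω : (ω • 1 - A).PosSemidef)
    (hGA : (G - A).PosSemidef) (hr : ∀ j, G j j / A j j ≤ r) :
    (A⁻¹ * G).trace - Fintype.card ι ≤ Fintype.card ι * ω / μ * (r - 1) := by
  have hr1 : 0 ≤ r - 1 := by
    obtain ⟨j⟩ := ‹Nonempty ι›
    have hAG : A j j ≤ G j j := sub_nonneg.mp hGA.diag_nonneg
    linarith [(one_le_div hA.diag_pos).mpr hAG |>.trans (hr j)]
  calc (A⁻¹ * G).trace - Fintype.card ι = (A⁻¹ * (G - A)).trace := by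
        rw [Matrix.mul_sub, trace_sub, nonsing_inv_mul A hA.det_pos.ne'.isUnit, trace_one]
    _ ≤ μ⁻¹ * (G - A).trace := hA.trace_inv_mul_le hμ hAμ hGA
    _ ≤ μ⁻¹ * ((r - 1) * (Fintype.card ι * ω)) := by
        gcongr
        exact (trace_sub_le_of_diag_div_le hA hr).trans <|
          mul_le_mul_of_nonneg_left (trace_le_card_mul_of_posSemidef_smul_one_sub hAω) hr1
    _ = Fintype.card ι * ω / μ * (r - 1) := by ring

end PosDef

end Matrix

section BFGS

variable {ι : Type*} [Fintype ι] [DecidableEq ι]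

/-- `vecMulVec (G *ᵥ u) (G *ᵥ u)` stands for the paper's `G u uᵀ G`; the two agree for
symmetric `G`. -/
noncomputable def bfgsUpdate (A G : Matrix ι ι ℝ) (u : ι → ℝ) : Matrix ι ι ℝ :=
  G - (u ⬝ᵥ G *ᵥ u)⁻¹ • vecMulVec (G *ᵥ u) (G *ᵥ u)
    + (u ⬝ᵥ A *ᵥ u)⁻¹ • vecMulVec (A *ᵥ u) (A *ᵥ u)

theorem bfgsUpdate_single (A G : Matrix ι ι ℝ) (i : ι) :
    bfgsUpdate A G (Pi.single i 1) =
      G - (G i i)⁻¹ • vecMulVec (G *ᵥ Pi.single i 1) (G *ᵥ Pi.single i 1)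
        + (A i i)⁻¹ • vecMulVec (A *ᵥ Pi.single i 1) (A *ᵥ Pi.single i 1) := by
  rw [bfgsUpdate, single_one_dotProduct_mulVec_single_one, single_one_dotProduct_mulVec_single_one]

variable {A : Matrix ι ι ℝ}

theorem Matrix.PosDef.trace_inv_mul_bfgsUpdate (hA : A.PosDef) (G : Matrix ι ι ℝ) {u : ι → ℝ}
    (hu : u ≠ 0) :
    (A⁻¹ * bfgsUpdate A G u).trace =
      (A⁻¹ * G).trace - (G *ᵥ u ⬝ᵥ A⁻¹ *ᵥ G *ᵥ u) / (u ⬝ᵥ G *ᵥ u) + 1 := by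
  have ha : u ⬝ᵥ A *ᵥ u ≠ 0 := by simpa using (hA.dotProduct_mulVec_pos hu).ne'
  rw [bfgsUpdate, Matrix.mul_add, Matrix.mul_sub, Matrix.mul_smul, Matrix.mul_smul, trace_add,
    trace_sub, trace_smul, trace_smul, trace_mul_vecMulVec, trace_mul_vecMulVec,
    hA.inv_mulVec_mulVec, dotProduct_comm (A⁻¹ *ᵥ _), dotProduct_comm u (A *ᵥ u), smul_eq_mul,
    smul_eq_mul, inv_mul_cancel₀ (by rwa [dotProduct_comm]), inv_mul_eq_div]

theorem Matrix.PosDef.trace_inv_mul_bfgsUpdate_le (hA : A.PosDef) {G : Matrix ι ι ℝ}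
    {u : ι → ℝ} (hu : u ≠ 0) (hG : 0 < u ⬝ᵥ G *ᵥ u) :
    (A⁻¹ * bfgsUpdate A G u).trace ≤
      (A⁻¹ * G).trace - (u ⬝ᵥ G *ᵥ u) / (u ⬝ᵥ A *ᵥ u) + 1 := by
  have ha : 0 < u ⬝ᵥ A *ᵥ u := by simpa using hA.dotProduct_mulVec_pos hu
  have hcs := hA.inv.posSemidef.dotProduct_mulVec_sq_le (G *ᵥ u) (A *ᵥ u)
  rw [hA.inv_mulVec_mulVec, dotProduct_comm (G *ᵥ u), dotProduct_comm (A *ᵥ u)] at hcs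
  suffices (u ⬝ᵥ G *ᵥ u) / (u ⬝ᵥ A *ᵥ u) ≤ (G *ᵥ u ⬝ᵥ A⁻¹ *ᵥ G *ᵥ u) / (u ⬝ᵥ G *ᵥ u) by
    rw [hA.trace_inv_mul_bfgsUpdate G hu]
    linarith
  rw [div_le_div_iff₀ ha hG, ← sq]
  exact hcs

end BFGS

/-- Greedy BFGS update: with `μI ⪯ A ⪯ ωI`, `G ⪰ A`, and `i₀` the greedy
coordinate maximizing `⟨G eᵢ, eᵢ⟩/⟨A eᵢ, eᵢ⟩ = G i i / A i i`, the BFGS update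
`G⁺ = G - GūūᵀG/⟨Gū,ū⟩ + AūūᵀA/⟨Aū,ū⟩` (with `ū = e_{i₀}`) satisfies
`σ_A(G⁺) ≤ (1 - μ/(nω)) σ_A(G)`. -/
theorem stmt_14 {n : ℕ} (hn : 0 < n) (A G : Matrix (Fin n) (Fin n) ℝ)
    (μ ω : ℝ) (hμ : 0 < μ) (hμω : μ ≤ ω)
    (hA : A.PosDef) (hG : G.PosDef)
    (hAμ : (A - μ • (1 : Matrix (Fin n) (Fin n) ℝ)).PosSemidef)
    (hAω : ((ω • (1 : Matrix (Fin n) (Fin n) ℝ)) - A).PosSemidef)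
    (hGA : (G - A).PosSemidef)
    (i₀ : Fin n) (hgreedy : ∀ j, G j j / A j j ≤ G i₀ i₀ / A i₀ i₀) :
    (A⁻¹ * (G - (G i₀ i₀)⁻¹ • vecMulVec (G *ᵥ Pi.single i₀ 1) (G *ᵥ Pi.single i₀ 1)
        + (A i₀ i₀)⁻¹ • vecMulVec (A *ᵥ Pi.single i₀ 1) (A *ᵥ Pi.single i₀ 1))).trace - n ≤
      (1 - μ / (n * ω)) * ((A⁻¹ * G).trace - n) := by
  have hω : 0 < ω := hμ.trans_le hμω
  have hn' : (0 : ℝ) < n := Nat.cast_pos.mpr hn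
  have : Nonempty (Fin n) := ⟨i₀⟩
  have hσ := hA.trace_inv_mul_sub_card_le hμ hAμ hAω hGA hgreedy
  have hstep := hA.trace_inv_mul_bfgsUpdate_le (G := G) (u := Pi.single i₀ 1)
    (Pi.single_ne_zero_iff.mpr one_ne_zero) (by simpa using hG.diag_pos)
  rw [bfgsUpdate_single, single_one_dotProduct_mulVec_single_one,
    single_one_dotProduct_mulVec_single_one] at hstep
  rw [Fintype.card_fin] at hσ
  have hdecrease : μ / (n * ω) * ((A⁻¹ * G).trace - n) ≤ G i₀ i₀ / A i₀ i₀ - 1 :=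
    calc μ / (n * ω) * ((A⁻¹ * G).trace - n)
        ≤ μ / (n * ω) * (n * ω / μ * (G i₀ i₀ / A i₀ i₀ - 1)) := by gcongr
      _ = G i₀ i₀ / A i₀ i₀ - 1 := by field_simp
  linarith
end

section
/- Let G, H ∈ ℝ^{n×n} be symmetric positive definite with H ⪯ G ⪯ (1+ε)H for some ε ≥ 0, and suppose μI ⪯ H ⪯ ωI with κ = ω/μ and ε ≤ 1/(2κ − 1). Then for every α ∈ (0,1], ‖I − αHG⁻¹‖ ≤ 1 − α/2, where ‖·‖ is the spectral norm. -/
open Matrix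
open scoped Matrix.Norms.L2Operator

variable {n : ℕ}

private lemma psd_smul {A : Matrix (Fin n) (Fin n) ℝ} (hA : A.PosSemidef) {c : ℝ} (hc : 0 ≤ c) :
    (c • A).PosSemidef := by
  refine PosSemidef.of_dotProduct_mulVec_nonneg ?_ (fun x => ?_)
  · rw [IsHermitian, conjTranspose_smul, hA.1.eq]; simp
  · rw [smul_mulVec, dotProduct_smul, smul_eq_mul]
    exact mul_nonneg hc (hA.dotProduct_mulVec_nonneg x)

private lemma psd_conj {A C : Matrix (Fin n) (Fin n) ℝ} (hA : A.PosSemidef)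
    (hC : Cᴴ = C) : (C * A * C).PosSemidef := by
  have := hA.mul_mul_conjTranspose_same C
  rwa [hC] at this

private lemma posdef_conj {A C : Matrix (Fin n) (Fin n) ℝ} (hA : A.PosDef)
    (hC : Cᴴ = C) (hdet : IsUnit C.det) : (C * A * C).PosDef := by
  refine PosDef.of_dotProduct_mulVec_pos ?_ (fun ⦃x⦄ hx => ?_)
  · rw [IsHermitian]
    simp only [conjTranspose_mul, hC, hA.1.eq, mul_assoc]
  · have hinj : Function.Injective (C.mulVec) :=
      Matrix.mulVec_injective_iff_isUnit.mpr ((isUnit_iff_isUnit_det _).2 hdet)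
    have hCx : C *ᵥ x ≠ 0 := by
      intro h0
      exact hx (hinj (by simpa using h0))
    have := hA.dotProduct_mulVec_pos hCx
    calc (0:ℝ) < star (C *ᵥ x) ⬝ᵥ (A *ᵥ (C *ᵥ x)) := this
    _ = star x ⬝ᵥ ((C * A * C) *ᵥ x) := by
        rw [star_mulVec, hC, ← dotProduct_mulVec, mulVec_mulVec, mulVec_mulVec]

private lemma psd_sqrt_ex {A : Matrix (Fin n) (Fin n) ℝ} (hA : A.PosSemidef) :
    ∃ S : Matrix (Fin n) (Fin n) ℝ, Sᴴ = S ∧ S * S = A := by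
  open scoped MatrixOrder in
  exact ⟨CFC.sqrt A, (CFC.sqrt_nonneg A).posSemidef.1, CFC.sqrt_mul_sqrt_self A hA.nonneg⟩

private lemma comm_inv {A T : Matrix (Fin n) (Fin n) ℝ} (hA : IsUnit A.det)
    (h : T * A⁻¹ = A⁻¹ * T) : T * A = A * T := by
  calc T * A = (A * A⁻¹) * T * A := by rw [Matrix.mul_nonsing_inv A hA, one_mul]
    _ = A * (A⁻¹ * T) * A := by rw [mul_assoc A A⁻¹ T]
    _ = A * (T * A⁻¹) * A := by rw [h]
    _ = A * T * (A⁻¹ * A) := by simp only [mul_assoc]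
    _ = A * T := by rw [Matrix.nonsing_inv_mul A hA, mul_one]

private lemma exists_T {A : Matrix (Fin n) (Fin n) ℝ} (hA : A.PosDef) :
    ∃ T : Matrix (Fin n) (Fin n) ℝ,
      Tᴴ = T ∧ IsUnit T.det ∧ T * T = A⁻¹ ∧ T * A * T = 1 := by
  obtain ⟨S, hSh, hSS⟩ : ∃ S : Matrix (Fin n) (Fin n) ℝ, Sᴴ = S ∧ S * S = A⁻¹ :=
    psd_sqrt_ex hA.inv.posSemidef
  have hdet : IsUnit A.det := hA.det_pos.ne'.isUnit
  have hSdet : IsUnit S.det := by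
    have h : S.det * S.det = A⁻¹.det := by rw [← det_mul, hSS]
    have hpos : 0 < A⁻¹.det := hA.inv.det_pos
    refine isUnit_iff_ne_zero.mpr (fun h0 => ?_)
    rw [h0, mul_zero] at h
    exact hpos.ne (by rw [h])
  have h1 : S * A⁻¹ = A⁻¹ * S := by rw [← hSS, mul_assoc]
  have h2 := comm_inv hdet h1
  refine ⟨S, hSh, hSdet, hSS, ?_⟩
  rw [mul_assoc, ← h2, ← mul_assoc, hSS, Matrix.nonsing_inv_mul A hdet]

/-- inverse is antitone w.r.t. the Loewner order -/
private lemma psd_inv_sub_inv {A B : Matrix (Fin n) (Fin n) ℝ} (hA : A.PosDef) (hB : B.PosDef)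
    (h : (B - A).PosSemidef) : (A⁻¹ - B⁻¹).PosSemidef := by
  obtain ⟨T, hTh, hTdet, hTT, hTAT⟩ := exists_T hA
  have hM : (T * B * T).PosDef := posdef_conj hB hTh hTdet
  have hM1 : (T * B * T - 1).PosSemidef := by
    have h1 := psd_conj h hTh
    have e : T * (B - A) * T = T * B * T - T * A * T := by noncomm_ring
    rw [e, hTAT] at h1
    exact h1
  obtain ⟨R, hRh, hRdet, hRR, hRMR⟩ := exists_T hM
  have hsub : ((1 : Matrix (Fin n) (Fin n) ℝ) - (T * B * T)⁻¹).PosSemidef := by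
    have h1 := psd_conj hM1 hRh
    have e : R * (T * B * T - 1) * R = R * (T * B * T) * R - R * R := by noncomm_ring
    rw [e, hRMR, hRR] at h1
    exact h1
  have final := psd_conj hsub hTh
  have e : T * (1 - (T * B * T)⁻¹) * T = A⁻¹ - B⁻¹ := by
    have hMinv : (T * B * T)⁻¹ = T⁻¹ * B⁻¹ * T⁻¹ := by
      rw [Matrix.mul_inv_rev, Matrix.mul_inv_rev, mul_assoc]
    have e1 : T * (1 - (T * B * T)⁻¹) * T = T * T - T * (T * B * T)⁻¹ * T := by noncomm_ring
    rw [e1, hTT, hMinv]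
    congr 1
    calc T * (T⁻¹ * B⁻¹ * T⁻¹) * T = (T * T⁻¹) * B⁻¹ * (T⁻¹ * T) := by
          simp only [mul_assoc]
      _ = B⁻¹ := by rw [Matrix.mul_nonsing_inv T hTdet, Matrix.nonsing_inv_mul T hTdet,
            one_mul, mul_one]
  rwa [e] at final

private lemma norm_le_of_psd {A : Matrix (Fin n) (Fin n) ℝ} {c : ℝ} (hA : A.PosSemidef)
    (hc : 0 ≤ c) (h : (c • (1 : Matrix (Fin n) (Fin n) ℝ) - A).PosSemidef) : ‖A‖ ≤ c := by
  have hAA : ((c ^ 2) • (1 : Matrix (Fin n) (Fin n) ℝ) - A * A).PosSemidef := by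
    obtain ⟨S, hSh, hSS⟩ : ∃ S : Matrix (Fin n) (Fin n) ℝ, Sᴴ = S ∧ S * S = A :=
      psd_sqrt_ex hA
    have h1 := psd_conj h hSh
    have e1 : S * (c • (1 : Matrix (Fin n) (Fin n) ℝ) - A) * S = c • A - A * A := by
      rw [← hSS]; noncomm_ring
    rw [e1] at h1
    have h2 := psd_smul h hc
    have e2 : c • (c • (1 : Matrix (Fin n) (Fin n) ℝ) - A)
        = (c ^ 2) • (1 : Matrix (Fin n) (Fin n) ℝ) - c • A := by
      rw [smul_sub, smul_smul, ← sq]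
    rw [e2] at h2
    have := h2.add h1
    rwa [sub_add_sub_cancel] at this
  -- quadratic form bound
  have hquad : ∀ x : Fin n → ℝ, (A *ᵥ x) ⬝ᵥ (A *ᵥ x) ≤ c ^ 2 * (x ⬝ᵥ x) := by
    intro x
    have h0 := hAA.dotProduct_mulVec_nonneg x
    have e : star x ⬝ᵥ ((c ^ 2 • (1 : Matrix (Fin n) (Fin n) ℝ) - A * A) *ᵥ x)
        = c ^ 2 * (x ⬝ᵥ x) - x ⬝ᵥ ((A * A) *ᵥ x) := by
      simp [Matrix.sub_mulVec, Matrix.smul_mulVec, dotProduct_smul, smul_eq_mul]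
    rw [e] at h0
    have hx : x ᵥ* A = A *ᵥ x := by
      have h3 := Matrix.star_mulVec (M := A) (v := x)
      rw [hA.1.eq] at h3
      simpa using h3.symm
    have e2 : x ⬝ᵥ ((A * A) *ᵥ x) = (A *ᵥ x) ⬝ᵥ (A *ᵥ x) := by
      rw [← Matrix.mulVec_mulVec, Matrix.dotProduct_mulVec, hx]
    rw [e2] at h0
    linarith
  -- operator norm bound
  rw [Matrix.l2_opNorm_def]
  refine ContinuousLinearMap.opNorm_le_bound _ hc (fun x => ?_)
  set y := (LinearMap.toContinuousLinearMap (Matrix.toEuclideanLin A)) x with hy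
  have hyx : ∀ i, y i = (A *ᵥ (fun j => x j)) i := fun i => rfl
  have hny : ‖y‖ ^ 2 = (A *ᵥ (fun j => x j)) ⬝ᵥ (A *ᵥ (fun j => x j)) := by
    rw [← real_inner_self_eq_norm_sq, PiLp.inner_apply]
    simp [PiLp.inner_apply, hyx, dotProduct, mul_comm, sq]
  have hnx : ‖x‖ ^ 2 = (fun j => x j) ⬝ᵥ (fun j => x j) := by
    rw [← real_inner_self_eq_norm_sq, PiLp.inner_apply]
    simp [PiLp.inner_apply, dotProduct, mul_comm, sq]
  have key : ‖y‖ ^ 2 ≤ (c * ‖x‖) ^ 2 := by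
    rw [hny, mul_pow, hnx]
    exact hquad _
  have h1 := Real.sqrt_le_sqrt key
  rwa [Real.sqrt_sq (norm_nonneg _), Real.sqrt_sq (by positivity)] at h1

private lemma pd_smul {A : Matrix (Fin n) (Fin n) ℝ} (hA : A.PosDef) {c : ℝ} (hc : 0 < c) :
    (c • A).PosDef := by
  refine PosDef.of_dotProduct_mulVec_pos ?_ (fun ⦃x⦄ hx => ?_)
  · rw [IsHermitian, conjTranspose_smul, hA.1.eq]; simp
  · rw [smul_mulVec, dotProduct_smul, smul_eq_mul]
    exact mul_pos hc (hA.dotProduct_mulVec_pos hx)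

/-- If `H ⪯ G ⪯ (1+ε)H`, `μI ⪯ H ⪯ ωI` with `κ = ω/μ` and `ε ≤ 1/(2κ-1)`,
then for every `α ∈ (0,1]`, the spectral norm bound
`‖I - α H G⁻¹‖ ≤ 1 - α/2` holds. -/
theorem stmt_19 {n : ℕ} (G H : Matrix (Fin n) (Fin n) ℝ)
    (hH : H.PosDef) (hG : G.PosDef)
    (ε : ℝ) (hε0 : 0 ≤ ε)
    (hHG : (G - H).PosSemidef)
    (hGH : ((1 + ε) • H - G).PosSemidef)
    (μ ω κ : ℝ) (hμ : 0 < μ) (hμω : μ ≤ ω)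
    (hHμ : (H - μ • (1 : Matrix (Fin n) (Fin n) ℝ)).PosSemidef)
    (hHω : ((ω • (1 : Matrix (Fin n) (Fin n) ℝ)) - H).PosSemidef)
    (hκ : κ = ω / μ) (hεκ : ε ≤ 1 / (2 * κ - 1))
    (α : ℝ) (hα0 : 0 < α) (hα1 : α ≤ 1) :
    ‖(1 : Matrix (Fin n) (Fin n) ℝ) - α • (H * G⁻¹)‖ ≤ 1 - α / 2 := by
  have hε1 : (0:ℝ) < 1 + ε := by linarith
  have hω : (0:ℝ) < ω := lt_of_lt_of_le hμ hμω
  set t : ℝ := ε / (1 + ε) with ht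
  have ht0 : 0 ≤ t := div_nonneg hε0 hε1.le
  set c : ℝ := t * μ⁻¹ with hc
  have hc0 : 0 ≤ c := mul_nonneg ht0 (by positivity)
  -- P = H⁻¹ - G⁻¹ is PSD
  have hP : (H⁻¹ - G⁻¹).PosSemidef := psd_inv_sub_inv hH hG hHG
  -- (μ•1)⁻¹ = μ⁻¹ • 1
  have hμI : (μ • (1 : Matrix (Fin n) (Fin n) ℝ)).PosDef := pd_smul Matrix.PosDef.one hμ
  have hinv1 : (μ • (1 : Matrix (Fin n) (Fin n) ℝ))⁻¹ = μ⁻¹ • 1 := by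
    refine Matrix.inv_eq_left_inv ?_
    rw [smul_mul_smul_comm, inv_mul_cancel₀ hμ.ne', one_mul, one_smul]
  -- H⁻¹ ⪯ μ⁻¹ • 1
  have h3 : (μ⁻¹ • (1 : Matrix (Fin n) (Fin n) ℝ) - H⁻¹).PosSemidef := by
    have := psd_inv_sub_inv hμI hH hHμ
    rwa [hinv1] at this
  -- ((1+ε)•H)⁻¹ = (1+ε)⁻¹ • H⁻¹
  have hεH : ((1 + ε) • H).PosDef := pd_smul hH hε1
  have hinv2 : ((1 + ε) • H)⁻¹ = (1 + ε)⁻¹ • H⁻¹ := by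
    refine Matrix.inv_eq_left_inv ?_
    rw [smul_mul_smul_comm, inv_mul_cancel₀ hε1.ne',
      Matrix.nonsing_inv_mul H hH.det_pos.ne'.isUnit, one_smul]
  -- (1+ε)⁻¹ • H⁻¹ ⪯ G⁻¹
  have h4 : (G⁻¹ - (1 + ε)⁻¹ • H⁻¹).PosSemidef := by
    have := psd_inv_sub_inv hG hεH hGH
    rwa [hinv2] at this
  -- H⁻¹ - G⁻¹ ⪯ t • H⁻¹
  have h5 : (t • H⁻¹ - (H⁻¹ - G⁻¹)).PosSemidef := by
    have e : t • H⁻¹ - (H⁻¹ - G⁻¹) = G⁻¹ - (1 + ε)⁻¹ • H⁻¹ := by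
      have e2 : t = 1 - (1 + ε)⁻¹ := by
        rw [ht]; field_simp; ring
      rw [e2, sub_smul, one_smul]
      abel
    rw [e]
    exact h4
  -- t • H⁻¹ ⪯ c • 1
  have h6 : (c • (1 : Matrix (Fin n) (Fin n) ℝ) - t • H⁻¹).PosSemidef := by
    have := psd_smul h3 ht0
    rwa [smul_sub, smul_smul] at this
  -- combine:  P ⪯ c • 1
  have h7 : (c • (1 : Matrix (Fin n) (Fin n) ℝ) - (H⁻¹ - G⁻¹)).PosSemidef := by
    have := h6.add h5
    rwa [sub_add_sub_cancel] at this
  have hnormP : ‖H⁻¹ - G⁻¹‖ ≤ c := norm_le_of_psd hP hc0 h7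
  have hnormH : ‖H‖ ≤ ω := norm_le_of_psd hH.posSemidef hω.le hHω
  have hnorm1 : ‖(1 : Matrix (Fin n) (Fin n) ℝ)‖ ≤ 1 := by
    refine norm_le_of_psd Matrix.PosSemidef.one zero_le_one ?_
    simpa using Matrix.PosSemidef.zero
  -- decomposition
  have hHinv : H * H⁻¹ = 1 := Matrix.mul_nonsing_inv H hH.det_pos.ne'.isUnit
  have e : (1 : Matrix (Fin n) (Fin n) ℝ) - α • (H * G⁻¹)
      = (1 - α) • (1 : Matrix (Fin n) (Fin n) ℝ) + α • (H * (H⁻¹ - G⁻¹)) := by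
    rw [Matrix.mul_sub, hHinv, smul_sub, sub_smul, one_smul]
    abel
  -- the key scalar bound : ω * c ≤ 1 / 2
  have hωc : ω * c ≤ 1 / 2 := by
    have hκ1 : (1:ℝ) ≤ κ := by rw [hκ]; exact (one_le_div hμ).mpr hμω
    have h2κ : (0:ℝ) < 2 * κ - 1 := by linarith
    have hεb : ε * (2 * κ - 1) ≤ 1 := by
      rw [← le_div_iff₀ h2κ]; exact hεκ
    have hκω : κ * μ = ω := by rw [hκ]; field_simp
    have e2 : ω * c = (ω * ε) / ((1 + ε) * μ) := by
      rw [hc, ht]; field_simp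
    rw [e2, div_le_iff₀ (by positivity)]
    nlinarith [mul_le_mul_of_nonneg_right hεb hμ.le]
  -- final norm computation
  calc ‖(1 : Matrix (Fin n) (Fin n) ℝ) - α • (H * G⁻¹)‖
      = ‖(1 - α) • (1 : Matrix (Fin n) (Fin n) ℝ) + α • (H * (H⁻¹ - G⁻¹))‖ := by rw [e]
    _ ≤ ‖(1 - α) • (1 : Matrix (Fin n) (Fin n) ℝ)‖ + ‖α • (H * (H⁻¹ - G⁻¹))‖ := norm_add_le _ _
    _ = (1 - α) * ‖(1 : Matrix (Fin n) (Fin n) ℝ)‖ + α * ‖H * (H⁻¹ - G⁻¹)‖ := by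
        rw [norm_smul, norm_smul, Real.norm_eq_abs, Real.norm_eq_abs,
          abs_of_nonneg (by linarith), abs_of_nonneg hα0.le]
    _ ≤ (1 - α) * 1 + α * (ω * c) := by
        refine add_le_add ?_ ?_
        · exact mul_le_mul_of_nonneg_left hnorm1 (by linarith)
        · refine mul_le_mul_of_nonneg_left ?_ hα0.le
          calc ‖H * (H⁻¹ - G⁻¹)‖ ≤ ‖H‖ * ‖H⁻¹ - G⁻¹‖ := Matrix.l2_opNorm_mul _ _
            _ ≤ ω * c := mul_le_mul hnormH hnormP (norm_nonneg _) hω.le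
    _ ≤ 1 - α / 2 := by nlinarith
end
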